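/- Fix n ≥ 2, 1 ≤ k ≤ n-1, r ≥ 1 and N = binomial(n,k). Consider the pairing on R^N ⊕ R^r given by the matrix diag(I_N, -I_r) (modeling the intersection pairing between N_k and N_{n-k}). Let CF be the cone in R^N ⊕ R^r generated by the vectors f_I - g_j and g_j (1 ≤ I ≤ N indexing subsets, 1 ≤ j ≤ r), where f_I, g_j denote standard basis vectors. Then the dual cone of CF with respect to this pairing is generated by the N + 2^r - 1 vectors: f_J (for each J), and Σ_J f_J - Σ_{j∈S} g_j for each nonempty S ⊆ {1,...,r}. -/
import Mathlib


/-- with respect to the pairing `diag(I_N, -I_r)` on `ℝ^N ⊕ ℝ^r`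
(`N = C(n,k)`), the dual cone of the cone `CF` generated by the vectors
`f_I - g_j` and `g_j` is generated by the vectors `f_J` together with
`Σ_J f_J - Σ_{j∈S} g_j` for each nonempty `S ⊆ {1,…,r}` (the `N + 2^r - 1`
extremal rays). -/
theorem stmt9 (n k r : ℕ) (hn : 2 ≤ n) (hk : 1 ≤ k) (hkn : k ≤ n - 1) (hr : 1 ≤ r)
    (B : (Fin (n.choose k) ⊕ Fin r → ℝ) → (Fin (n.choose k) ⊕ Fin r → ℝ) → ℝ)
    (hB : ∀ v w, B v w =
      (∑ i, v (Sum.inl i) * w (Sum.inl i)) - ∑ j, v (Sum.inr j) * w (Sum.inr j)) :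
    ∀ w : Fin (n.choose k) ⊕ Fin r → ℝ,
      (∀ v : Fin (n.choose k) ⊕ Fin r → ℝ,
        (∃ (lam : Fin (n.choose k) → Fin r → ℝ) (mu : Fin r → ℝ),
          (∀ i j, 0 ≤ lam i j) ∧ (∀ j, 0 ≤ mu j) ∧
          ∀ x, v x =
            (∑ i, ∑ j, lam i j *
              ((Pi.single (Sum.inl i) 1 - Pi.single (Sum.inr j) 1 :
                Fin (n.choose k) ⊕ Fin r → ℝ) x)) +
            ∑ j, mu j *
              (Pi.single (Sum.inr j) (1 : ℝ) : Fin (n.choose k) ⊕ Fin r → ℝ) x) →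
        0 ≤ B v w) ↔
      (∃ (c : Fin (n.choose k) → ℝ) (d : Finset (Fin r) → ℝ),
        (∀ i, 0 ≤ c i) ∧ (∀ S, 0 ≤ d S) ∧ d ∅ = 0 ∧
        ∀ x, w x =
          (∑ i, c i *
            (Pi.single (Sum.inl i) (1 : ℝ) : Fin (n.choose k) ⊕ Fin r → ℝ) x) +
          ∑ S : Finset (Fin r), d S *
            ((∑ i, (Pi.single (Sum.inl i) (1 : ℝ) :
                Fin (n.choose k) ⊕ Fin r → ℝ) x) -
             ∑ j ∈ S, (Pi.single (Sum.inr j) (1 : ℝ) :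
                Fin (n.choose k) ⊕ Fin r → ℝ) x)) := by
  intro w
  constructor
  · intro hdual
    -- Step 1: extract the linear inequalities defining the dual cone
    have hg : ∀ j : Fin r, w (Sum.inr j) ≤ 0 := by
      intro j
      have hrep : ∀ x, (Pi.single (Sum.inr j) (1:ℝ) :
          Fin (n.choose k) ⊕ Fin r → ℝ) x =
          (∑ i : Fin (n.choose k), ∑ j' : Fin r, (0:ℝ) *
            ((Pi.single (Sum.inl i) 1 - Pi.single (Sum.inr j') 1 :
              Fin (n.choose k) ⊕ Fin r → ℝ) x)) +
          ∑ j' : Fin r, (Pi.single j (1:ℝ) : Fin r → ℝ) j' *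
            (Pi.single (Sum.inr j') (1:ℝ) : Fin (n.choose k) ⊕ Fin r → ℝ) x := by
        intro x
        rw [Finset.sum_eq_single j (fun b _ hb => by
          rw [Pi.single_eq_of_ne hb, zero_mul]) (by simp)]
        simp
      have h := hdual (Pi.single (Sum.inr j) 1)
        ⟨fun _ _ => 0, Pi.single j 1, fun _ _ => le_rfl,
         fun j' => by
          classical
          rcases eq_or_ne j' j with h | h
          · subst h; simp
          · rw [Pi.single_eq_of_ne h], hrep⟩
      rw [hB] at h
      simp [Pi.single_apply] at h
      linarith
    have hfg : ∀ (i : Fin (n.choose k)) (j : Fin r),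
        0 ≤ w (Sum.inl i) + w (Sum.inr j) := by
      intro i j
      have hrep : ∀ x, ((Pi.single (Sum.inl i) 1 - Pi.single (Sum.inr j) 1 :
          Fin (n.choose k) ⊕ Fin r → ℝ)) x =
          (∑ i' : Fin (n.choose k), ∑ j' : Fin r,
            (if i' = i then if j' = j then (1:ℝ) else 0 else 0) *
            ((Pi.single (Sum.inl i') 1 - Pi.single (Sum.inr j') 1 :
              Fin (n.choose k) ⊕ Fin r → ℝ) x)) +
          ∑ j' : Fin r, (0:ℝ) *
            (Pi.single (Sum.inr j') (1:ℝ) : Fin (n.choose k) ⊕ Fin r → ℝ) x := by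
        intro x
        rw [Finset.sum_eq_single i (fun b _ hb => by simp [hb]) (by simp)]
        rw [Finset.sum_eq_single j (fun b _ hb => by simp [hb]) (by simp)]
        simp
      have h := hdual (Pi.single (Sum.inl i) 1 - Pi.single (Sum.inr j) 1)
        ⟨fun i' j' => if i' = i then if j' = j then 1 else 0 else 0, fun _ => 0,
         fun i' j' => by
          dsimp only
          split
          · split <;> norm_num
          · norm_num,
         fun _ => le_rfl, hrep⟩
      rw [hB] at h
      simp [Pi.single_apply] at h
      linarith
    -- Step 2: sorting data
    have hrp : 0 < r := hr
    set b : Fin r → ℝ := fun j => -w (Sum.inr j) with hbdef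
    have hb0 : ∀ j, 0 ≤ b j := fun j => by
      simp only [hbdef]; linarith [hg j]
    set σ : Equiv.Perm (Fin r) := Tuple.sort b with hσ
    have hmono : Monotone (b ∘ σ) := Tuple.monotone_sort b
    set bbn : ℕ → ℝ := fun t => b (σ ⟨min t (r-1), by omega⟩) with hbbndef
    have hbbnmono : Monotone bbn := by
      intro s t hst
      exact hmono (by simp [Fin.le_def]; omega)
    have hbbn0 : ∀ t, 0 ≤ bbn t := fun t => hb0 _
    set diffn : ℕ → ℝ := fun t => bbn t - (if t = 0 then 0 else bbn (t-1))
      with hdiffndef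
    have hdiffnn : ∀ t, 0 ≤ diffn t := by
      intro t
      simp only [hdiffndef]
      split
      · simpa using hbbn0 t
      · have := hbbnmono (show t - 1 ≤ t by omega); linarith
    have tel : ∀ s, ∑ t ∈ Finset.range (s+1), diffn t = bbn s := by
      intro s
      induction s with
      | zero => simp [hdiffndef]
      | succ s ih =>
        rw [Finset.sum_range_succ, ih]
        simp [hdiffndef]
    have hbval : ∀ j : Fin r, b j = bbn ((σ.symm j) : ℕ) := by
      intro j
      have h1 : min ((σ.symm j : ℕ)) (r-1) = (σ.symm j : ℕ) := by
        have := (σ.symm j).isLt; omega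
      simp only [hbbndef, h1]
      congr 1
      rw [show (⟨(σ.symm j : ℕ), by omega⟩ : Fin r) = σ.symm j from Fin.eta _ _]
      simp
    have hmax : ∀ j : Fin r, b j ≤ bbn (r-1) := by
      intro j
      rw [hbval j]
      exact hbbnmono (by have := (σ.symm j).isLt; omega)
    have hab : ∀ i, bbn (r-1) ≤ w (Sum.inl i) := by
      intro i
      have h1 : bbn (r-1) = -w (Sum.inr (σ ⟨min (r-1) (r-1), by omega⟩)) := rfl
      have h2 := hfg i (σ ⟨min (r-1) (r-1), by omega⟩)
      linarith
    -- Step 3: the sets and the coefficients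
    set Sm : Fin r → Finset (Fin r) := fun m => (Finset.Ici m).image σ with hSmdef
    have hSm_ne : ∀ m, (Sm m).Nonempty :=
      fun m => ⟨σ m, Finset.mem_image_of_mem _ (Finset.mem_Ici.2 le_rfl)⟩
    have hmemSm : ∀ (j : Fin r) (m : Fin r), j ∈ Sm m ↔ m ≤ σ.symm j := by
      intro j m
      simp only [hSmdef, Finset.mem_image, Finset.mem_Ici]
      constructor
      · rintro ⟨a, ha, rfl⟩; simpa using ha
      · intro h; exact ⟨σ.symm j, h, by simp⟩
    refine ⟨fun i => w (Sum.inl i) - bbn (r-1),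
            fun S => ∑ m : Fin r, if S = Sm m then diffn (m : ℕ) else 0,
            fun i => by simpa using sub_nonneg.2 (hab i), ?_, ?_, ?_⟩
    · intro S
      apply Finset.sum_nonneg
      intro m _
      split
      · exact hdiffnn _
      · exact le_rfl
    · apply Finset.sum_eq_zero
      intro m _
      rw [if_neg]
      intro h
      exact (hSm_ne m).ne_empty h.symm
    · have hdsum : ∀ F : Finset (Fin r) → ℝ,
          ∑ S : Finset (Fin r),
            (∑ m : Fin r, if S = Sm m then diffn (m : ℕ) else 0) * F S
          = ∑ m : Fin r, diffn (m : ℕ) * F (Sm m) := by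
        intro F
        simp_rw [Finset.sum_mul, ite_mul, zero_mul]
        rw [Finset.sum_comm]
        refine Finset.sum_congr rfl fun m _ => ?_
        rw [Finset.sum_ite_eq' Finset.univ (Sm m) (fun S => diffn (m:ℕ) * F S)]
        simp
      have htot : ∑ m : Fin r, diffn (m : ℕ) = bbn (r-1) := by
        rw [Fin.sum_univ_eq_sum_range]
        have h := tel (r-1)
        rwa [show r - 1 + 1 = r by omega] at h
      have hpart : ∀ j : Fin r,
          ∑ m : Fin r, (if j ∈ Sm m then diffn (m : ℕ) else 0) = b j := by
        intro j
        have h1 : ∀ m : Fin r, (if j ∈ Sm m then diffn (m : ℕ) else 0)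
            = (fun t => if t ≤ ((σ.symm j : ℕ)) then diffn t else 0) (m : ℕ) := by
          intro m
          simp only [hmemSm j m, Fin.le_def]
        simp_rw [h1]
        have h2 : (∑ x : Fin r, if (x:ℕ) ≤ ((σ.symm j : ℕ)) then diffn (x:ℕ) else 0)
            = ∑ t ∈ Finset.range r, if t ≤ ((σ.symm j : ℕ)) then diffn t else 0 :=
          Fin.sum_univ_eq_sum_range (fun t => if t ≤ ((σ.symm j : ℕ)) then diffn t else 0) r
        rw [h2]
        have hsub : Finset.range ((σ.symm j : ℕ) + 1) ⊆ Finset.range r :=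
          Finset.range_subset_range.2 (by have := (σ.symm j).isLt; omega)
        rw [← Finset.sum_subset hsub (fun t ht hnt => by
          simp only [Finset.mem_range] at ht hnt
          rw [if_neg]; omega)]
        rw [Finset.sum_congr rfl (fun t ht => by
          simp only [Finset.mem_range] at ht
          rw [if_pos]; omega)]
        rw [tel, hbval]
      intro x
      cases x with
      | inl I =>
        have e1 : ∀ i : Fin (n.choose k),
            (Pi.single (Sum.inl i) (1:ℝ) : Fin (n.choose k) ⊕ Fin r → ℝ)
              (Sum.inl I) = if Sum.inl (β := Fin r) I = Sum.inl i then 1 else 0 :=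
          fun i => Pi.single_apply _ _ _
        have e2 : ∀ (S : Finset (Fin r)) (j : Fin r), j ∈ S →
            (Pi.single (Sum.inr j) (1:ℝ) : Fin (n.choose k) ⊕ Fin r → ℝ)
              (Sum.inl I) = 0 := by
          intro S j _
          exact Pi.single_eq_of_ne (by simp) _
        calc w (Sum.inl I)
            = (w (Sum.inl I) - bbn (r-1)) + ∑ m : Fin r, diffn (m : ℕ) := by
              rw [htot]; ring
          _ = (w (Sum.inl I) - bbn (r-1))
              + ∑ m : Fin r, diffn (m : ℕ) * ((∑ i : Fin (n.choose k),
                  (Pi.single (Sum.inl i) (1:ℝ) :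
                    Fin (n.choose k) ⊕ Fin r → ℝ) (Sum.inl I))
                - ∑ j ∈ Sm m, (Pi.single (Sum.inr j) (1:ℝ) :
                    Fin (n.choose k) ⊕ Fin r → ℝ) (Sum.inl I)) := by
              congr 1
              refine Finset.sum_congr rfl fun m _ => ?_
              rw [Finset.sum_eq_zero (e2 (Sm m)), Finset.sum_congr rfl
                (fun i _ => e1 i)]
              simp [Finset.sum_ite_eq']
          _ = _ := by
              rw [← hdsum (fun S => (∑ i : Fin (n.choose k),
                    (Pi.single (Sum.inl i) (1:ℝ) :
                      Fin (n.choose k) ⊕ Fin r → ℝ) (Sum.inl I))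
                  - ∑ j ∈ S, (Pi.single (Sum.inr j) (1:ℝ) :
                      Fin (n.choose k) ⊕ Fin r → ℝ) (Sum.inl I))]
              congr 1
              rw [Finset.sum_congr rfl (fun i _ => by rw [e1 i])]
              simp [Finset.sum_ite_eq, Finset.sum_ite_eq', mul_ite]
      | inr j =>
        have e1 : ∀ i : Fin (n.choose k),
            (Pi.single (Sum.inl i) (1:ℝ) : Fin (n.choose k) ⊕ Fin r → ℝ)
              (Sum.inr j) = 0 :=
          fun i => Pi.single_eq_of_ne (by simp) _
        have e2 : ∀ (j' : Fin r),
            (Pi.single (Sum.inr j') (1:ℝ) : Fin (n.choose k) ⊕ Fin r → ℝ)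
              (Sum.inr j) = if Sum.inr (α := Fin (n.choose k)) j = Sum.inr j'
                then 1 else 0 :=
          fun j' => Pi.single_apply _ _ _
        have e3 : ∀ (S : Finset (Fin r)),
            ∑ j' ∈ S, (Pi.single (Sum.inr j') (1:ℝ) :
              Fin (n.choose k) ⊕ Fin r → ℝ) (Sum.inr j)
            = if j ∈ S then 1 else 0 := by
          intro S
          rw [Finset.sum_congr rfl (fun j' _ => e2 j')]
          simp [Finset.sum_ite_eq']
        calc w (Sum.inr j)
            = -(b j) := by simp [hbdef]
          _ = -∑ m : Fin r, (if j ∈ Sm m then diffn (m : ℕ) else 0) := by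
              rw [hpart]
          _ = ∑ m : Fin r, diffn (m : ℕ) * ((∑ i : Fin (n.choose k),
                  (Pi.single (Sum.inl i) (1:ℝ) :
                    Fin (n.choose k) ⊕ Fin r → ℝ) (Sum.inr j))
                - ∑ j' ∈ Sm m, (Pi.single (Sum.inr j') (1:ℝ) :
                    Fin (n.choose k) ⊕ Fin r → ℝ) (Sum.inr j)) := by
              rw [← Finset.sum_neg_distrib]
              refine Finset.sum_congr rfl fun m _ => ?_
              rw [e3, Finset.sum_eq_zero (fun i _ => e1 i)]
              split <;> simp
          _ = _ := by
              rw [← hdsum (fun S => (∑ i : Fin (n.choose k),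
                    (Pi.single (Sum.inl i) (1:ℝ) :
                      Fin (n.choose k) ⊕ Fin r → ℝ) (Sum.inr j))
                  - ∑ j' ∈ S, (Pi.single (Sum.inr j') (1:ℝ) :
                      Fin (n.choose k) ⊕ Fin r → ℝ) (Sum.inr j))]
              simp only [e1, mul_zero, Finset.sum_const_zero, zero_add]
  · rintro ⟨c, d, hc, hd, hde, hw⟩ v ⟨lam, mu, hlam, hmu, hv⟩
    rw [hB]
    have hwI : ∀ I, w (Sum.inl I) = c I + ∑ S : Finset (Fin r), d S := by
      intro I
      rw [hw (Sum.inl I)]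
      have hA : ∑ i : Fin (n.choose k), c i *
          (Pi.single (Sum.inl i) (1:ℝ) : Fin (n.choose k) ⊕ Fin r → ℝ)
            (Sum.inl I) = c I := by
        rw [Finset.sum_eq_single I (fun b _ hb => by
          rw [Pi.single_eq_of_ne (by simp [hb.symm]) _, mul_zero]) (by simp)]
        simp
      have hz : ∀ (S : Finset (Fin r)), ∀ j ∈ S,
          (Pi.single (Sum.inr j) (1:ℝ) : Fin (n.choose k) ⊕ Fin r → ℝ)
            (Sum.inl I) = 0 :=
        fun S j _ => Pi.single_eq_of_ne (by simp) _
      have hone : ∑ i : Fin (n.choose k), (Pi.single (Sum.inl i) (1:ℝ) :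
          Fin (n.choose k) ⊕ Fin r → ℝ) (Sum.inl I) = 1 := by
        rw [Finset.sum_eq_single
          (f := fun i : Fin (n.choose k) => (Pi.single (Sum.inl i) (1:ℝ) :
            Fin (n.choose k) ⊕ Fin r → ℝ) (Sum.inl I)) I
          (fun b _ hb => by simp [Pi.single_apply, Ne.symm hb])
          (by simp)]
        simp
      have hB2 : ∀ S : Finset (Fin r),
          ((∑ i : Fin (n.choose k), (Pi.single (Sum.inl i) (1:ℝ) :
              Fin (n.choose k) ⊕ Fin r → ℝ) (Sum.inl I))
            - ∑ j ∈ S, (Pi.single (Sum.inr j) (1:ℝ) :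
              Fin (n.choose k) ⊕ Fin r → ℝ) (Sum.inl I)) = 1 := by
        intro S
        rw [Finset.sum_eq_zero (hz S), hone]
        ring
      rw [hA]
      simp_rw [hB2]
      simp
    have hwJ : ∀ j, w (Sum.inr j)
        = -∑ S : Finset (Fin r), (if j ∈ S then d S else 0) := by
      intro j
      rw [hw (Sum.inr j)]
      have e1 : ∀ i : Fin (n.choose k),
          (Pi.single (Sum.inl i) (1:ℝ) : Fin (n.choose k) ⊕ Fin r → ℝ)
            (Sum.inr j) = 0 :=
        fun i => Pi.single_eq_of_ne (by simp) _
      have e3 : ∀ (S : Finset (Fin r)),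
          ∑ j' ∈ S, (Pi.single (Sum.inr j') (1:ℝ) :
            Fin (n.choose k) ⊕ Fin r → ℝ) (Sum.inr j)
          = if j ∈ S then 1 else 0 := by
        intro S
        rw [Finset.sum_congr rfl (fun j' _ => Pi.single_apply _ _ _)]
        simp [Finset.sum_ite_eq']
      have hA : ∑ i : Fin (n.choose k), c i *
          (Pi.single (Sum.inl i) (1:ℝ) : Fin (n.choose k) ⊕ Fin r → ℝ)
            (Sum.inr j) = 0 :=
        Finset.sum_eq_zero (fun i _ => by rw [e1 i, mul_zero])
      have hB2 : ∀ S : Finset (Fin r),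
          ((∑ i : Fin (n.choose k), (Pi.single (Sum.inl i) (1:ℝ) :
              Fin (n.choose k) ⊕ Fin r → ℝ) (Sum.inr j))
            - ∑ j' ∈ S, (Pi.single (Sum.inr j') (1:ℝ) :
              Fin (n.choose k) ⊕ Fin r → ℝ) (Sum.inr j))
          = -(if j ∈ S then (1:ℝ) else 0) := by
        intro S
        have hz2 : ∑ i : Fin (n.choose k), (Pi.single (Sum.inl i) (1:ℝ) :
            Fin (n.choose k) ⊕ Fin r → ℝ) (Sum.inr j) = 0 :=
          Finset.sum_eq_zero (fun i _ => e1 i)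
        rw [e3 S, hz2]
        ring
      rw [hA]
      simp_rw [hB2]
      simp only [zero_add, mul_neg, mul_ite, mul_one, mul_zero,
        Finset.sum_neg_distrib]
    have hposI : ∀ I j, 0 ≤ w (Sum.inl I) + w (Sum.inr j) := by
      intro I j
      rw [hwI, hwJ]
      have h1 : ∑ S : Finset (Fin r), (if j ∈ S then d S else 0)
          ≤ ∑ S : Finset (Fin r), d S := by
        apply Finset.sum_le_sum
        intro S _
        split
        · exact le_rfl
        · exact hd S
      linarith [hc I]
    have hnegJ : ∀ j, w (Sum.inr j) ≤ 0 := by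
      intro j
      rw [hwJ]
      simp only [neg_nonpos]
      apply Finset.sum_nonneg
      intro S _
      split
      · exact hd S
      · exact le_rfl
    have hvI : ∀ I, v (Sum.inl I) = ∑ j, lam I j := by
      intro I
      rw [hv (Sum.inl I)]
      have : ∀ (i : Fin (n.choose k)) (j : Fin r),
          lam i j * ((Pi.single (Sum.inl i) 1 - Pi.single (Sum.inr j) 1 :
            Fin (n.choose k) ⊕ Fin r → ℝ) (Sum.inl I))
          = if i = I then lam i j else 0 := by
        intro i j
        rw [Pi.sub_apply, Pi.single_apply, Pi.single_apply]
        rcases eq_or_ne i I with h | h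
        · simp [h]
        · simp [h, Ne.symm h, (show Sum.inl (β := Fin r) I ≠ Sum.inl i by simp [Ne.symm h])]
      simp_rw [this]
      rw [Finset.sum_eq_single I (fun b _ hb => by simp [hb]) (by simp)]
      simp [Pi.single_apply]
    have hvJ : ∀ j, v (Sum.inr j) = mu j - ∑ I, lam I j := by
      intro j
      rw [hv (Sum.inr j)]
      have h1 : ∀ (i : Fin (n.choose k)) (j' : Fin r),
          lam i j' * ((Pi.single (Sum.inl i) 1 - Pi.single (Sum.inr j') 1 :
            Fin (n.choose k) ⊕ Fin r → ℝ) (Sum.inr j))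
          = if j' = j then -lam i j' else 0 := by
        intro i j'
        rw [Pi.sub_apply, Pi.single_apply, Pi.single_apply]
        rcases eq_or_ne j' j with h | h
        · simp [h]
        · simp [h, (show Sum.inr (α := Fin (n.choose k)) j ≠ Sum.inr j' by
            simp [Ne.symm h])]
      simp_rw [h1]
      have h2 : ∀ j' : Fin r, mu j' *
          (Pi.single (Sum.inr j') (1:ℝ) : Fin (n.choose k) ⊕ Fin r → ℝ) (Sum.inr j)
          = if j' = j then mu j' else 0 := by
        intro j'
        rw [Pi.single_apply]
        rcases eq_or_ne j' j with h | h
        · simp [h]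
        · simp [h, (show Sum.inr (α := Fin (n.choose k)) j ≠ Sum.inr j' by
            simp [Ne.symm h])]
      simp_rw [h2]
      rw [Finset.sum_ite_eq' Finset.univ j (fun j' => mu j')]
      simp only [Finset.sum_ite_eq', Finset.mem_univ, if_true]
      ring_nf
      rw [Finset.sum_neg_distrib]
      ring
    have expand : (∑ I, v (Sum.inl I) * w (Sum.inl I))
        - ∑ j, v (Sum.inr j) * w (Sum.inr j)
        = (∑ I, ∑ j, lam I j * (w (Sum.inl I) + w (Sum.inr j)))
          + ∑ j, mu j * (-w (Sum.inr j)) := by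
      have e1 : ∀ I, v (Sum.inl I) * w (Sum.inl I)
          = ∑ j, lam I j * w (Sum.inl I) := by
        intro I; rw [hvI, Finset.sum_mul]
      have e2 : ∀ j, v (Sum.inr j) * w (Sum.inr j)
          = mu j * w (Sum.inr j) - ∑ I, lam I j * w (Sum.inr j) := by
        intro j; rw [hvJ, sub_mul, Finset.sum_mul]
      have swap : (∑ j : Fin r, ∑ I : Fin (n.choose k), lam I j * w (Sum.inr j))
          = ∑ I : Fin (n.choose k), ∑ j : Fin r, lam I j * w (Sum.inr j) :=
        Finset.sum_comm
      simp_rw [e1, e2, mul_add, mul_neg]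
      rw [Finset.sum_sub_distrib, swap]
      simp_rw [Finset.sum_add_distrib, Finset.sum_neg_distrib]
      ring
    rw [expand]
    apply add_nonneg
    · apply Finset.sum_nonneg; intro I _
      apply Finset.sum_nonneg; intro j _
      exact mul_nonneg (hlam I j) (hposI I j)
    · apply Finset.sum_nonneg; intro j _
      exact mul_nonneg (hmu j) (by linarith [hnegJ j])
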